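/- arXiv:1610.06345 — 3 statements merged into one kernel-verified Lean document; each statement's English description precedes it below -/
import Mathlib

section
/- For every even natural number n ≥ 2, there exists a family of n − 1 pairwise disjoint perfect matchings on [n] = {1,…,n} (a maximal pairwise disjoint set of matchings, i.e. a 1-factorization of the complete graph on n vertices). -/
/-- A perfect matching on `[n] = {1,…,n}` (modelled as `Fin n`), represented as a
fixed-point-free involution `f`: the pairs of the matching are `{i, f i}`. -/
def IsPerfectMatching (n : ℕ) (f : Fin n → Fin n) : Prop :=
  Function.Involutive f ∧ ∀ i, f i ≠ i

/-!
The round-robin construction. Adjoin a point `∞` to an abelian group `G` in which doubling is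
injective (for the theorem, `G = Fin (n - 1)`, of odd order). For each `r : G` match `∞` with
`r` and every other `x` with its reflection `2r - x` through `r`. Reflections through `r ≠ s`
never send a point to the same place, because `2r ≠ 2s`.
-/

section RoundRobin

variable {G : Type*} [AddCommGroup G]

theorem two_nsmul_sub_eq_self_iff {r x : G} : 2 • r - x = r ↔ x = r := by
  rw [sub_eq_iff_eq_add, two_nsmul, add_right_inj, eq_comm]

variable [DecidableEq G]

/-- `none` is the point at infinity. -/
def roundRobin (r : G) : Option G → Option G
  | none => some r
  | some x => if x = r then none else some (2 • r - x)

theorem roundRobin_involutive (r : G) : Function.Involutive (roundRobin r) := by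
  rintro (_ | x)
  · simp [roundRobin]
  · by_cases hx : x = r
    · simp [roundRobin, hx]
    · simp [roundRobin, hx, two_nsmul_sub_eq_self_iff]

variable (hG : Function.Injective (2 • · : G → G))
include hG

theorem roundRobin_ne_self (r : G) (a : Option G) : roundRobin r a ≠ a := by
  rcases a with _ | x
  · simp [roundRobin]
  · by_cases hx : x = r
    · simp [roundRobin, hx]
    · refine fun h => hx (hG ?_)
      simp only [roundRobin, hx, if_false, Option.some.injEq, sub_eq_iff_eq_add] at h
      simpa [two_nsmul] using h.symm

theorem roundRobin_ne_of_ne {r s : G} (hrs : r ≠ s) (a : Option G) :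
    roundRobin r a ≠ roundRobin s a := by
  rcases a with _ | x
  · simpa [roundRobin] using hrs
  · by_cases hr : x = r <;> by_cases hs : x = s
    · exact absurd (hr.symm.trans hs) hrs
    all_goals simp [roundRobin, hr, hs, hrs, hrs.symm, hG.ne hrs]

end RoundRobin

theorem isPerfectMatching_conj {n : ℕ} {α : Type*} (e : Fin n ≃ α) {f : α → α}
    (hf : Function.Involutive f) (hfix : ∀ a, f a ≠ a) :
    IsPerfectMatching n (e.symm ∘ f ∘ e) :=
  ⟨fun i => by simp [hf (e i)], fun i h => hfix (e i) (by simpa [e.symm_apply_eq] using h)⟩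

theorem exists_maximal_pairwise_disjoint_matchings_general (n : ℕ) (hev : Even n) :
    ∃ M : Fin (n - 1) → (Fin n → Fin n),
      (∀ α, IsPerfectMatching n (M α)) ∧
      (∀ α β, α ≠ β → ∀ i, M α i ≠ M β i) := by
  rcases n with _ | m
  · exact ⟨Fin.elim0, fun r => r.elim0, fun r => r.elim0⟩
  have hodd : Odd m := by rwa [Nat.even_add_one, Nat.not_even_iff_odd] at hev
  have : NeZero m := ⟨hodd.pos.ne'⟩
  have hdouble : Function.Injective (2 • · : Fin m → Fin m) :=
    (Nat.Coprime.nsmul_right_bijective (by simpa using hodd)).injective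
  let e := finSuccEquiv m
  refine ⟨fun (r : Fin m) => e.symm ∘ roundRobin r ∘ e, fun (r : Fin m) => ?_,
    fun r s hrs i => ?_⟩
  · exact isPerfectMatching_conj e (roundRobin_involutive r) (roundRobin_ne_self hdouble r)
  · simpa using roundRobin_ne_of_ne hdouble hrs (e i)

/-- For every even `n ≥ 2` there exists a family of `n - 1` pairwise disjoint
perfect matchings on `[n]` (a 1-factorization of the complete graph `K_n`).
Two matchings are disjoint when they share no pair, i.e. `M α i ≠ M β i` for all `i`. -/
theorem exists_maximal_pairwise_disjoint_matchings (n : ℕ) (hn : 2 ≤ n) (hev : Even n) :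
    ∃ M : Fin (n - 1) → (Fin n → Fin n),
      (∀ α, IsPerfectMatching n (M α)) ∧
      (∀ α β, α ≠ β → ∀ i, M α i ≠ M β i) :=
  exists_maximal_pairwise_disjoint_matchings_general n hev
end

section
/- Let n ≥ 2 be even, x ∈ {0,1}^n, and let M_1, …, M_{n−1} be pairwise disjoint perfect matchings on [n]. Then (1/(n−1)) Σ_{α=1}^{n−1} E^{inc,x}_{M_α} = (n/(2(n−1))) (I_n − |φ_x⟩⟨φ_x|) and (1/(n−1)) Σ_{α=1}^{n−1} E^{cor,x}_{M_α} = (n/(2(n−1))) (((n−2)/n) I_n + |φ_x⟩⟨φ_x|). -/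
open Matrix

/-- The hidden matching state `|φ_x⟩ = (1/√n) Σ_i (−1)^{x_i} |i⟩` in `ℂ^n`. -/
noncomputable def phi (n : ℕ) (x : Fin n → Bool) : Fin n → ℂ :=
  fun i => (if x i then -1 else 1) / (Real.sqrt n : ℂ)

/-- `(−1)^{x_i ⊕ x_j}` as a complex number. -/
def eps (n : ℕ) (x : Fin n → Bool) (i j : Fin n) : ℂ :=
  if x i = x j then 1 else -1

/-- The incorrect-outcome vector `|ψ^x_{ij}⟩ = (1/√2)(|i⟩ − (−1)^{x_i⊕x_j}|j⟩)`. -/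
noncomputable def psi (n : ℕ) (x : Fin n → Bool) (i j : Fin n) : Fin n → ℂ :=
  fun k => ((if k = i then 1 else 0) - eps n x i j * (if k = j then 1 else 0)) /
    (Real.sqrt 2 : ℂ)

/-- The correct-outcome vector `|χ^x_{ij}⟩ = (1/√2)(|i⟩ + (−1)^{x_i⊕x_j}|j⟩)`. -/
noncomputable def chi (n : ℕ) (x : Fin n → Bool) (i j : Fin n) : Fin n → ℂ :=
  fun k => ((if k = i then 1 else 0) + eps n x i j * (if k = j then 1 else 0)) /
    (Real.sqrt 2 : ℂ)

/-- The outer product `|u⟩⟨u|` as an `n × n` matrix. -/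
noncomputable def outer {n : ℕ} (u : Fin n → ℂ) : Matrix (Fin n) (Fin n) ℂ :=
  Matrix.vecMulVec u (star u)

/-- The incorrect-outcome projector `E^{inc,x}_M`, summed over the pairs of the
matching `f`, each represented once by its smaller endpoint. -/
noncomputable def Einc (n : ℕ) (x : Fin n → Bool) (f : Fin n → Fin n) :
    Matrix (Fin n) (Fin n) ℂ :=
  ∑ i ∈ Finset.univ.filter (fun i => i < f i), outer (psi n x i (f i))

/-- The correct-outcome projector `E^{cor,x}_M`, summed over the pairs of the
matching `f`, each represented once by its smaller endpoint. -/
noncomputable def Ecor (n : ℕ) (x : Fin n → Bool) (f : Fin n → Fin n) :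
    Matrix (Fin n) (Fin n) ℂ :=
  ∑ i ∈ Finset.univ.filter (fun i => i < f i), outer (chi n x i (f i))

/-!
Write `S_M` for the sign matrix `((−1)^{x_i ⊕ x_j})_{ij}` restricted to the pairs of a matching `M`.
Splitting the projector onto `(|i⟩ ± (−1)^{x_i⊕x_j}|j⟩)/√2` into a half coming from `i` and a half
coming from `j` shows `E^{inc,x}_M = (I − S_M)/2` and `E^{cor,x}_M = (I + S_M)/2`. Pairwise disjoint
fixed-point-free matchings, `n − 1` of them, hit every off-diagonal position `(i, j)` exactly once,
so `∑_α S_{M_α}` is the off-diagonal part of the sign matrix, namely `n |φ_x⟩⟨φ_x| − I`.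
-/

open Finset

theorem Function.Involutive.sum_filter_lt_add {α M : Type*} [Fintype α] [LinearOrder α]
    [AddCommMonoid M] {f : α → α} (hf : Function.Involutive f) (hfix : ∀ i, f i ≠ i)
    (g : α → M) : ∑ i ∈ univ.filter (fun i => i < f i), (g i + g (f i)) = ∑ i, g i := by
  have hswap : ∑ i ∈ univ.filter (fun i => i < f i), g (f i) =
      ∑ i ∈ univ.filter (fun i => ¬ i < f i), g i :=
    sum_nbij' f f (by simpa [hf _] using fun i => le_of_lt)
      (by simpa [hf _] using fun i h => lt_of_le_of_ne h (hfix i))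
      (fun i _ => hf i) (fun i _ => hf i) (fun _ _ => rfl)
  rw [sum_add_distrib, hswap, sum_filter_add_sum_filter_not]

theorem existsUnique_apply_eq_of_pairwise_ne {ι α : Type*} [Fintype ι] [Fintype α]
    [DecidableEq α] (M : ι → α → α) (hcard : Fintype.card ι + 1 = Fintype.card α)
    (hfix : ∀ a k, M a k ≠ k) (hdisj : ∀ a b, a ≠ b → ∀ k, M a k ≠ M b k)
    {k l : α} (hkl : k ≠ l) : ∃! a, M a k = l := by
  let e : ι → {m // m ≠ k} := fun a => ⟨M a k, hfix a k⟩
  have he : Function.Bijective e := by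
    refine (Fintype.bijective_iff_injective_and_card e).mpr ⟨fun a b h => ?_, ?_⟩
    · by_contra hab; exact hdisj a b hab k (congrArg Subtype.val h)
    · simp only [ne_eq, Fintype.card_subtype_compl, Fintype.card_unique]; omega
  obtain ⟨a, ha⟩ := he.existsUnique ⟨l, hkl.symm⟩
  exact ⟨a, congrArg Subtype.val ha.1, fun b hb => ha.2 b (Subtype.ext hb)⟩

def restrictGraph {α R : Type*} [DecidableEq α] [Zero R] (f : α → α) (A : Matrix α α R) :
    Matrix α α R :=
  of fun k l => if l = f k then A k l else 0

theorem restrictGraph_neg {α R : Type*} [DecidableEq α] [NegZeroClass R] (f : α → α)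
    (A : Matrix α α R) :
    restrictGraph f (-A) = -restrictGraph f A := by
  ext k l
  simp only [restrictGraph, of_apply, Matrix.neg_apply]
  split_ifs <;> simp

theorem sum_restrictGraph {ι α R : Type*} [Fintype ι] [Fintype α] [DecidableEq α] [AddCommGroup R]
    (M : ι → α → α) (hcard : Fintype.card ι + 1 = Fintype.card α)
    (hfix : ∀ a k, M a k ≠ k) (hdisj : ∀ a b, a ≠ b → ∀ k, M a k ≠ M b k) (A : Matrix α α R) :
    ∑ a, restrictGraph (M a) A = A - diagonal A.diag := by
  ext k l
  simp only [restrictGraph, Matrix.sum_apply, of_apply, Matrix.sub_apply, diagonal_apply,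
    diag_apply]
  rcases eq_or_ne k l with rfl | hkl
  · simp [fun a => (hfix a k).symm]
  · obtain ⟨a, ha, huniq⟩ := existsUnique_apply_eq_of_pairwise_ne M hcard hfix hdisj hkl
    rw [sum_eq_single a (fun b _ hb => if_neg fun h => hb (huniq b h.symm)) (by simp),
      if_pos ha.symm, if_neg hkl, sub_zero]

noncomputable def pairState {n : ℕ} (i j : Fin n) (c : ℂ) : Fin n → ℂ :=
  (Real.sqrt 2 : ℂ)⁻¹ • (Pi.single i 1 + c • Pi.single j 1)

noncomputable def halfRow {n : ℕ} (i j : Fin n) (c : ℂ) : Matrix (Fin n) (Fin n) ℂ :=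
  (2 : ℂ)⁻¹ • vecMulVec (Pi.single i 1) (Pi.single i 1 + c • Pi.single j 1)

theorem outer_pairState {n : ℕ} (i j : Fin n) {c : ℂ} (hc : c = 1 ∨ c = -1) :
    outer (pairState i j c) = halfRow i j c + halfRow j i c := by
  have hstar : star c = c := by rcases hc with rfl | rfl <;> simp
  have hc2 : c * c = 1 := by rcases hc with rfl | rfl <;> norm_num
  have h2 : (Real.sqrt 2 : ℂ)⁻¹ * (Real.sqrt 2 : ℂ)⁻¹ = 2⁻¹ := by
    rw [← mul_inv, ← Complex.ofReal_mul, Real.mul_self_sqrt zero_le_two, Complex.ofReal_ofNat]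
  ext k l
  simp only [outer, pairState, halfRow, vecMulVec_apply, Pi.star_apply, Pi.smul_apply,
    Pi.add_apply, Pi.single_apply, smul_eq_mul, star_mul', star_add, hstar, Complex.star_def,
    apply_ite (starRingEnd ℂ), map_one, map_zero, Complex.conj_ofReal, map_inv₀,
    Matrix.add_apply, Matrix.smul_apply]
  set a : ℂ := if k = i then 1 else 0
  set b : ℂ := if k = j then 1 else 0
  set a' : ℂ := if l = i then 1 else 0
  set b' : ℂ := if l = j then 1 else 0
  linear_combination (a + c * b) * (a' + c * b') * h2 + b * b' / 2 * hc2

theorem sum_filter_outer_pairState {n : ℕ} {f : Fin n → Fin n} (hf : Function.Involutive f)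
    (hfix : ∀ i, f i ≠ i) (C : Matrix (Fin n) (Fin n) ℂ) (hsymm : C.IsSymm)
    (hsign : ∀ i j, C i j = 1 ∨ C i j = -1) :
    ∑ i ∈ univ.filter (fun i => i < f i), outer (pairState i (f i) (C i (f i))) =
      (2 : ℂ)⁻¹ • (1 + restrictGraph f C) := by
  calc _ = ∑ i ∈ univ.filter (fun i => i < f i),
        (halfRow i (f i) (C i (f i)) + halfRow (f i) (f (f i)) (C (f i) (f (f i)))) := by
        refine sum_congr rfl fun i _ => ?_
        rw [outer_pairState _ _ (hsign _ _), hf i, hsymm.apply i (f i)]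
    _ = ∑ i, halfRow i (f i) (C i (f i)) := hf.sum_filter_lt_add hfix _
    _ = _ := by
        ext k l
        by_cases hl : l = f k <;>
          simp [halfRow, restrictGraph, Matrix.sum_apply, vecMulVec_apply, Pi.single_apply,
            one_apply, eq_comm, hl]

theorem eps_eq_one_or_neg_one (n : ℕ) (x : Fin n → Bool) (i j : Fin n) :
    eps n x i j = 1 ∨ eps n x i j = -1 := by
  unfold eps; split_ifs <;> simp

theorem isSymm_eps (n : ℕ) (x : Fin n → Bool) : (of (eps n x)).IsSymm := by
  ext i j; simp only [transpose_apply, of_apply, eps, eq_comm]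

theorem Einc_eq (n : ℕ) (x : Fin n → Bool) {f : Fin n → Fin n} (hf : IsPerfectMatching n f) :
    Einc n x f = (2 : ℂ)⁻¹ • (1 - restrictGraph f (of (eps n x))) := by
  have hpsi (i j : Fin n) : psi n x i j = pairState i j ((-of (eps n x)) i j) := by
    ext k; simp [psi, pairState, Pi.single_apply, div_eq_inv_mul, sub_eq_add_neg]
  simp only [Einc, hpsi, sub_eq_add_neg, ← restrictGraph_neg]
  exact sum_filter_outer_pairState hf.1 hf.2 _ (isSymm_eps n x).neg
    fun i j => by rcases eps_eq_one_or_neg_one n x i j with h | h <;> simp [h]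

theorem Ecor_eq (n : ℕ) (x : Fin n → Bool) {f : Fin n → Fin n} (hf : IsPerfectMatching n f) :
    Ecor n x f = (2 : ℂ)⁻¹ • (1 + restrictGraph f (of (eps n x))) := by
  have hchi (i j : Fin n) : chi n x i j = pairState i j (of (eps n x) i j) := by
    ext k; simp [chi, pairState, Pi.single_apply, div_eq_inv_mul]
  simp only [Ecor, hchi]
  exact sum_filter_outer_pairState hf.1 hf.2 _ (isSymm_eps n x) (eps_eq_one_or_neg_one n x)

theorem natCast_smul_outer_phi (n : ℕ) (x : Fin n → Bool) :
    (n : ℂ) • outer (phi n x) = of (eps n x) := by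
  ext k l
  have hn : (Real.sqrt n : ℂ) * (Real.sqrt n : ℂ) = n := by
    rw [← Complex.ofReal_mul, Real.mul_self_sqrt n.cast_nonneg, Complex.ofReal_natCast]
  have hn0 : (n : ℂ) ≠ 0 := Nat.cast_ne_zero.mpr (Fin.pos k).ne'
  simp only [outer, phi, Matrix.smul_apply, vecMulVec_apply, Pi.star_apply, star_div₀,
    Complex.star_def, Complex.conj_ofReal, apply_ite (starRingEnd ℂ), map_one, map_neg,
    smul_eq_mul, of_apply, eps, div_mul_div_comm, hn, mul_div_cancel₀ _ hn0]
  cases x k <;> cases x l <;> norm_num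

theorem diagonal_diag_eps (n : ℕ) (x : Fin n → Bool) : diagonal (of (eps n x)).diag = 1 := by
  ext k l; simp [eps, one_apply, diagonal_apply]

theorem averaged_projectors_general (n : ℕ) (hn : 2 ≤ n) (x : Fin n → Bool)
    (M : Fin (n - 1) → (Fin n → Fin n))
    (hpm : ∀ α, IsPerfectMatching n (M α))
    (hdisj : ∀ α β, α ≠ β → ∀ i, M α i ≠ M β i) :
    ((n : ℂ) - 1)⁻¹ • ∑ α : Fin (n - 1), Einc n x (M α) =
      ((n : ℂ) / (2 * ((n : ℂ) - 1))) •
        ((1 : Matrix (Fin n) (Fin n) ℂ) - outer (phi n x)) ∧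
    ((n : ℂ) - 1)⁻¹ • ∑ α : Fin (n - 1), Ecor n x (M α) =
      ((n : ℂ) / (2 * ((n : ℂ) - 1))) •
        ((((n : ℂ) - 2) / (n : ℂ)) • (1 : Matrix (Fin n) (Fin n) ℂ) + outer (phi n x)) := by
  have hcard : ((n - 1 : ℕ) : ℂ) = n - 1 := by rw [Nat.cast_sub (by omega), Nat.cast_one]
  have hn0 : (n : ℂ) ≠ 0 := Nat.cast_ne_zero.mpr (by omega)
  have hsum : ∑ α, restrictGraph (M α) (of (eps n x)) = (n : ℂ) • outer (phi n x) - 1 := by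
    have hcount : Fintype.card (Fin (n - 1)) + 1 = Fintype.card (Fin n) := by
      simp only [Fintype.card_fin]; omega
    rw [sum_restrictGraph M hcount (fun α => (hpm α).2) hdisj, diagonal_diag_eps,
      natCast_smul_outer_phi]
  constructor
  · simp only [Einc_eq n x (hpm _), ← smul_sum, sum_sub_distrib, hsum, sum_const, card_univ,
      Fintype.card_fin, ← Nat.cast_smul_eq_nsmul ℂ, hcard]
    match_scalars
    · field_simp; ring
    · field_simp
  · simp only [Ecor_eq n x (hpm _), ← smul_sum, sum_add_distrib, hsum, sum_const, card_univ,
      Fintype.card_fin, ← Nat.cast_smul_eq_nsmul ℂ, hcard]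
    match_scalars
    · field_simp; ring
    · field_simp

/-- For even `n ≥ 2`, `x ∈ {0,1}^n` and pairwise disjoint perfect matchings
`M_1, …, M_{n-1}` on `[n]`:
`(1/(n−1)) Σ_α E^{inc,x}_{M_α} = (n/(2(n−1))) (I_n − |φ_x⟩⟨φ_x|)` and
`(1/(n−1)) Σ_α E^{cor,x}_{M_α} = (n/(2(n−1))) (((n−2)/n) I_n + |φ_x⟩⟨φ_x|)`. -/
theorem averaged_projectors (n : ℕ) (hn : 2 ≤ n) (hev : Even n) (x : Fin n → Bool)
    (M : Fin (n - 1) → (Fin n → Fin n))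
    (hpm : ∀ α, IsPerfectMatching n (M α))
    (hdisj : ∀ α β, α ≠ β → ∀ i, M α i ≠ M β i) :
    ((n : ℂ) - 1)⁻¹ • ∑ α : Fin (n - 1), Einc n x (M α) =
      ((n : ℂ) / (2 * ((n : ℂ) - 1))) •
        ((1 : Matrix (Fin n) (Fin n) ℂ) - outer (phi n x)) ∧
    ((n : ℂ) - 1)⁻¹ • ∑ α : Fin (n - 1), Ecor n x (M α) =
      ((n : ℂ) / (2 * ((n : ℂ) - 1))) •
        ((((n : ℂ) - 2) / (n : ℂ)) • (1 : Matrix (Fin n) (Fin n) ℂ) + outer (phi n x)) :=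
  averaged_projectors_general n hn x M hpm hdisj
end

section
/- Let n ≥ 2 be even, x ∈ {0,1}^n, M_1, …, M_{n−1} pairwise disjoint perfect matchings on [n], and η a Hermitian n×n complex matrix with Tr(η) = 1. Then the error probability averaged uniformly over the n−1 matchings satisfies (1/(n−1)) Σ_{α=1}^{n−1} Tr(E^{inc,x}_{M_α} η) = (n/(2(n−1))) (1 − ⟨φ_x|η|φ_x⟩). -/
open Matrix

/-! Each matching contributes `(Tr η - Σ_i ε_{i,M i} η_{i,M i}) / 2`. The `n - 1` disjoint
matchings pair every `i` with every `j ≠ i` exactly once, so their sum collects all off-diagonal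
terms `ε_{ij} η_{ij}`, which together with `Tr η` make up `n ⟨φ_x|η|φ_x⟩`. -/

open Finset

section Involution

variable {ι R : Type*} [Fintype ι] [LinearOrder ι] [AddCommMonoid R]

theorem Function.Involutive.sum_filter_lt_add_eq_sum {f : ι → ι} (hf : Function.Involutive f)
    (hfix : ∀ i, f i ≠ i) (g : ι → R) :
    ∑ i ∈ univ.filter (fun i => i < f i), (g i + g (f i)) = ∑ i, g i := by
  have hflip : ∑ i ∈ univ.filter (fun i => i < f i), g (f i)
      = ∑ i ∈ univ.filter (fun i => ¬ i < f i), g i := by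
    refine sum_nbij' f f ?_ ?_ (fun i _ => hf i) (fun i _ => hf i) (fun i _ => rfl)
    · intro i hi
      simp only [mem_filter, mem_univ, true_and, hf i] at hi ⊢
      exact hi.not_gt
    · intro i hi
      simp only [mem_filter, mem_univ, true_and, hf i, not_lt] at hi ⊢
      exact lt_of_le_of_ne hi (hfix i)
  rw [sum_add_distrib, hflip, sum_filter_add_sum_filter_not]

end Involution

theorem Finset.sum_apply_eq_sum_erase {ι κ R : Type*} [Fintype ι] [DecidableEq ι] [Fintype κ]
    [AddCommMonoid R] {M : κ → ι → ι} (hcard : Fintype.card ι ≤ Fintype.card κ + 1)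
    (hfix : ∀ α i, M α i ≠ i) (hdisj : ∀ α β, α ≠ β → ∀ i, M α i ≠ M β i)
    (i : ι) (g : ι → R) :
    ∑ α, g (M α i) = ∑ j ∈ univ.erase i, g j := by
  have hinj : Function.Injective (M · i) := fun α β h => by_contra fun hne => hdisj α β hne i h
  have himage : univ.image (M · i) = univ.erase i := by
    refine eq_of_subset_of_card_le (fun j hj => ?_) ?_
    · obtain ⟨α, -, rfl⟩ := mem_image.1 hj
      exact mem_erase.2 ⟨hfix α i, mem_univ _⟩
    · rw [card_erase_of_mem (mem_univ i), card_image_of_injective _ hinj, card_univ, card_univ]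
      omega
  rw [← himage, sum_image fun α _ β _ h => hinj h]

section HiddenMatching

variable {n : ℕ}

lemma eps_comm (x : Fin n → Bool) (i j : Fin n) : eps n x i j = eps n x j i := by
  simp [eps, eq_comm]

lemma eps_self (x : Fin n → Bool) (i : Fin n) : eps n x i i = 1 := by simp [eps]

lemma eps_mul_self (x : Fin n → Bool) (i j : Fin n) : eps n x i j * eps n x i j = 1 := by
  unfold eps; split <;> norm_num

lemma star_eps (x : Fin n → Bool) (i j : Fin n) : star (eps n x i j) = eps n x i j := by
  unfold eps; split <;> simp

lemma eps_eq_mul (x : Fin n → Bool) (i j : Fin n) :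
    eps n x i j = (if x i then -1 else 1) * (if x j then -1 else 1) := by
  cases hi : x i <;> cases hj : x j <;> simp [eps, hi, hj]

lemma trace_outer_mul (u : Fin n → ℂ) (η : Matrix (Fin n) (Fin n) ℂ) :
    (outer u * η).trace = star u ⬝ᵥ η *ᵥ u := by
  rw [outer, vecMulVec_mul, trace_vecMulVec, dotProduct_comm, dotProduct_mulVec]

lemma psi_eq_smul (x : Fin n → Bool) (i j : Fin n) :
    psi n x i j = (Real.sqrt 2 : ℂ)⁻¹ • (Pi.single i 1 - eps n x i j • Pi.single j 1) := by
  funext k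
  simp only [psi, Pi.smul_apply, Pi.sub_apply, Pi.single_apply, smul_eq_mul]
  ring

lemma star_psi_dotProduct_mulVec_psi (x : Fin n → Bool) (η : Matrix (Fin n) (Fin n) ℂ)
    (i j : Fin n) :
    star (psi n x i j) ⬝ᵥ η *ᵥ psi n x i j
      = (η i i + η j j - eps n x i j * (η i j + η j i)) / 2 := by
  have hsqrt : ((Real.sqrt 2 : ℝ) : ℂ)⁻¹ * ((Real.sqrt 2 : ℝ) : ℂ)⁻¹ = 1 / 2 := by
    rw [← mul_inv, ← Complex.ofReal_mul, Real.mul_self_sqrt zero_le_two]; norm_num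
  rw [psi_eq_smul]
  simp only [star_smul, star_sub, star_eps, Pi.star_single, star_one, RCLike.star_def,
    Complex.conj_ofReal, map_inv₀, mulVec_smul, mulVec_sub, mulVec_single_one, smul_dotProduct,
    dotProduct_smul, sub_dotProduct, dotProduct_sub, single_one_dotProduct, col_apply,
    smul_eq_mul]
  linear_combination (η i i + η j j - eps n x i j * (η i j + η j i)) * hsqrt
    + ((Real.sqrt 2 : ℂ)⁻¹) ^ 2 * η j j * eps_mul_self x i j

lemma trace_Einc_mul {f : Fin n → Fin n} (hf : IsPerfectMatching n f) (x : Fin n → Bool)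
    (η : Matrix (Fin n) (Fin n) ℂ) :
    (Einc n x f * η).trace = (η.trace - ∑ i, eps n x i (f i) * η i (f i)) / 2 := by
  set g : Fin n → ℂ := fun i => (η i i - eps n x i (f i) * η i (f i)) / 2
  have hpair : ∀ i, (outer (psi n x i (f i)) * η).trace = g i + g (f i) := fun i => by
    rw [trace_outer_mul, star_psi_dotProduct_mulVec_psi]
    simp only [g, hf.1 i, eps_comm x (f i) i]
    ring
  rw [Einc, sum_mul, trace_sum, sum_congr rfl fun i _ => hpair i,
    hf.1.sum_filter_lt_add_eq_sum hf.2, ← sum_div, sum_sub_distrib]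
  rfl

lemma sum_trace_Einc_mul {M : Fin (n - 1) → Fin n → Fin n}
    (hpm : ∀ α, IsPerfectMatching n (M α))
    (hdisj : ∀ α β, α ≠ β → ∀ i, M α i ≠ M β i) (x : Fin n → Bool)
    (η : Matrix (Fin n) (Fin n) ℂ) :
    ∑ α, (Einc n x (M α) * η).trace
      = ((n - 1 : ℕ) * η.trace - ∑ i, ∑ j ∈ univ.erase i, eps n x i j * η i j) / 2 := by
  have hcard : Fintype.card (Fin n) ≤ Fintype.card (Fin (n - 1)) + 1 := by
    simp only [Fintype.card_fin]
    omega
  simp only [trace_Einc_mul (hpm _), ← sum_div, sum_sub_distrib, sum_const, card_univ,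
    Fintype.card_fin, nsmul_eq_mul]
  rw [sum_comm]
  congr 2
  exact sum_congr rfl fun i _ =>
    sum_apply_eq_sum_erase hcard (fun α => (hpm α).2) hdisj i (fun j => eps n x i j * η i j)

lemma star_phi (x : Fin n → Bool) : star (phi n x) = phi n x := by
  funext i
  simp [phi, apply_ite]

lemma star_phi_dotProduct_mulVec_phi (x : Fin n → Bool) (η : Matrix (Fin n) (Fin n) ℂ) :
    star (phi n x) ⬝ᵥ η *ᵥ phi n x
      = (η.trace + ∑ i, ∑ j ∈ univ.erase i, eps n x i j * η i j) / n := by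
  have hsqrt : ((Real.sqrt n : ℝ) : ℂ) * ((Real.sqrt n : ℝ) : ℂ) = n := by
    rw [← Complex.ofReal_mul, Real.mul_self_sqrt n.cast_nonneg, Complex.ofReal_natCast]
  have hentry : ∀ i j, phi n x i * (η i j * phi n x j) = eps n x i j * η i j / n := by
    intro i j
    rw [phi, phi, eps_eq_mul, ← hsqrt]
    ring
  simp only [star_phi, dotProduct, mulVec, mul_sum, hentry, ← sum_div, trace, diag_apply,
    ← sum_add_distrib]
  congr 1
  exact sum_congr rfl fun i _ => by rw [← add_sum_erase _ _ (mem_univ i), eps_self, one_mul]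

end HiddenMatching

theorem averaged_error_probability_general (n : ℕ)
    (x : Fin n → Bool) (M : Fin (n - 1) → (Fin n → Fin n))
    (hpm : ∀ α, IsPerfectMatching n (M α))
    (hdisj : ∀ α β, α ≠ β → ∀ i, M α i ≠ M β i)
    (η : Matrix (Fin n) (Fin n) ℂ) (htr : η.trace = 1) :
    ((n : ℂ) - 1)⁻¹ * ∑ α : Fin (n - 1), (Einc n x (M α) * η).trace =
      ((n : ℂ) / (2 * ((n : ℂ) - 1))) *
        (1 - star (phi n x) ⬝ᵥ η.mulVec (phi n x)) := by
  have hn : n ≠ 0 := by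
    rintro rfl
    simp at htr
  rw [sum_trace_Einc_mul hpm hdisj, star_phi_dotProduct_mulVec_phi, htr,
    Nat.cast_sub (Nat.one_le_iff_ne_zero.2 hn), Nat.cast_one, div_mul_eq_div_div_swap]
  set S := ∑ i, ∑ j ∈ univ.erase i, eps n x i j * η i j
  have hn' : (n : ℂ) ≠ 0 := Nat.cast_ne_zero.2 hn
  linear_combination (1 + S) / ((n : ℂ) - 1) / 2 * mul_inv_cancel₀ hn'

/-- For even `n ≥ 2`, `x ∈ {0,1}^n`, pairwise disjoint perfect matchings
`M_1, …, M_{n-1}` on `[n]`, and a Hermitian matrix `η` with `Tr(η) = 1`, the error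
probability averaged uniformly over the `n − 1` matchings satisfies
`(1/(n−1)) Σ_α Tr(E^{inc,x}_{M_α} η) = (n/(2(n−1))) (1 − ⟨φ_x|η|φ_x⟩)`. -/
theorem averaged_error_probability (n : ℕ) (hn : 2 ≤ n) (hev : Even n)
    (x : Fin n → Bool) (M : Fin (n - 1) → (Fin n → Fin n))
    (hpm : ∀ α, IsPerfectMatching n (M α))
    (hdisj : ∀ α β, α ≠ β → ∀ i, M α i ≠ M β i)
    (η : Matrix (Fin n) (Fin n) ℂ) (hη : η.IsHermitian) (htr : η.trace = 1) :
    ((n : ℂ) - 1)⁻¹ * ∑ α : Fin (n - 1), (Einc n x (M α) * η).trace =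
      ((n : ℂ) / (2 * ((n : ℂ) - 1))) *
        (1 - star (phi n x) ⬝ᵥ η.mulVec (phi n x)) :=
  averaged_error_probability_general n x M hpm hdisj η htr
end
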